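/- arXiv:math/9201284 — 3 statements merged into one kernel-verified Lean document; each statement's English description precedes it below -/
import Mathlib

section
/- Let φ : Σ_A → ℝ be Hölder with constants C > 0 and α ∈ (0,1]. If x, y ∈ Σ_A satisfy x i = y i for all i ≥ 0 (i.e. y lies in the stable set of x), then the series Σ_{k=0}^∞ (φ(σ^k y) − φ(σ^k x)) converges absolutely, and moreover Σ_{k=0}^∞ |φ(σ^k y) − φ(σ^k x)| ≤ C · d(x,y)^α / (1 − 2^{−α}). -/
open Real

variable {r : ℕ}

/-- The two-sided subshift of finite type determined by the transition
matrix `A`. -/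
abbrev TwoSided (A : Fin r → Fin r → Prop) : Type :=
  {x : ℤ → Fin r // ∀ i, A (x i) (x (i + 1))}

/-- The shift homeomorphism `σ` on the two-sided subshift. -/
def shift2 {A : Fin r → Fin r → Prop} (x : TwoSided A) : TwoSided A :=
  ⟨fun i => x.1 (i + 1), fun i => x.2 (i + 1)⟩

/-- The metric `d(x,y) = ∑_{i ∈ ℤ, x i ≠ y i} 2^{-|i|}` on the two-sided
subshift. -/
noncomputable def dist2 {A : Fin r → Fin r → Prop} (x y : TwoSided A) : ℝ :=
  ∑' i : ℤ, if x.1 i ≠ y.1 i then (2 : ℝ) ^ (-|i|) else 0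

lemma shift2_iter {A : Fin r → Fin r → Prop} (x : TwoSided A) (k : ℕ) (i : ℤ) :
    (shift2^[k] x).1 i = x.1 (i + k) := by
  induction k generalizing x i with
  | zero => simp
  | succ k ih =>
    rw [Function.iterate_succ_apply, ih]
    show x.1 (i + k + 1) = _
    push_cast; ring_nf

lemma dist2_nonneg {A : Fin r → Fin r → Prop} (x y : TwoSided A) : 0 ≤ dist2 x y := by
  apply tsum_nonneg
  intro i
  split <;> positivity

lemma dist2_comm {A : Fin r → Fin r → Prop} (x y : TwoSided A) : dist2 x y = dist2 y x := by
  unfold dist2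
  refine tsum_congr fun i => ?_
  by_cases h : x.1 i = y.1 i <;> simp [h, Ne, eq_comm]

lemma dist2_shift {A : Fin r → Fin r → Prop} (x y : TwoSided A)
    (hxy : ∀ i : ℤ, 0 ≤ i → x.1 i = y.1 i) (k : ℕ) :
    dist2 (shift2^[k] x) (shift2^[k] y) = (2:ℝ) ^ (-(k:ℤ)) * dist2 x y := by
  unfold dist2
  rw [← tsum_mul_left]
  have := (Equiv.addRight (k:ℤ)).tsum_eq
    (fun i => (2:ℝ) ^ (-(k:ℤ)) * (if x.1 i ≠ y.1 i then (2 : ℝ) ^ (-|i|) else 0))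
  rw [← this]
  congr 1; funext i
  simp only [Equiv.coe_addRight, shift2_iter]
  by_cases h : x.1 (i + k) = y.1 (i + k)
  · simp [h]
  · have hneg : i + (k:ℤ) < 0 := by
      by_contra hc
      exact h (hxy _ (le_of_not_gt hc))
    have hi : i < 0 := by omega
    have : -|i| = -(k:ℤ) + -|i + k| := by
      rw [abs_of_neg hi, abs_of_neg hneg]; ring
    simp only [h, ne_eq, not_false_eq_true, if_true, this]
    rw [zpow_add₀ (two_ne_zero)]

/-- If `φ : Σ_A → ℝ` is Hölder with constants `C > 0` and `α ∈ (0,1]`, and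
`x i = y i` for all `i ≥ 0` (so `y` is in the stable set of `x`), then the
series `∑_{k=0}^∞ (φ(σ^k y) − φ(σ^k x))` converges absolutely, and the sum of
absolute values is at most `C · d(x,y)^α / (1 − 2^{−α})`. -/
theorem stable_series_absolutely_convergent
    {A : Fin r → Fin r → Prop} (φ : TwoSided A → ℝ)
    (C α : ℝ) (hC : 0 < C) (hα : α ∈ Set.Ioc (0 : ℝ) 1)
    (hφ : ∀ x y : TwoSided A, |φ x - φ y| ≤ C * dist2 x y ^ α)
    (x y : TwoSided A) (hxy : ∀ i : ℤ, 0 ≤ i → x.1 i = y.1 i) :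
    Summable (fun k : ℕ => |φ (shift2^[k] y) - φ (shift2^[k] x)|) ∧
      ∑' k : ℕ, |φ (shift2^[k] y) - φ (shift2^[k] x)| ≤
        C * dist2 x y ^ α / (1 - (2 : ℝ) ^ (-α)) := by
  obtain ⟨hα0, hα1⟩ := hα
  set d := dist2 x y with hd
  have hd0 : 0 ≤ d := dist2_nonneg x y
  have hq0 : (0:ℝ) < (2:ℝ) ^ (-α) := Real.rpow_pos_of_pos (by norm_num) _
  have hq1 : (2:ℝ) ^ (-α) < 1 :=
    Real.rpow_lt_one_of_one_lt_of_neg (by norm_num) (by linarith)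
  have key : ∀ k : ℕ, |φ (shift2^[k] y) - φ (shift2^[k] x)| ≤
      C * d ^ α * ((2:ℝ) ^ (-α)) ^ k := by
    intro k
    have h1 := hφ (shift2^[k] y) (shift2^[k] x)
    have h2 : dist2 (shift2^[k] y) (shift2^[k] x) = (2:ℝ) ^ (-(k:ℤ)) * d := by
      rw [dist2_shift y x (fun i hi => (hxy i hi).symm) k, hd, dist2_comm]
    rw [h2] at h1
    have h3 : ((2:ℝ) ^ (-(k:ℤ)) * d) ^ α = ((2:ℝ) ^ (-α)) ^ k * d ^ α := by
      rw [Real.mul_rpow (by positivity) hd0]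
      congr 1
      rw [← Real.rpow_intCast 2 (-(k:ℤ)), ← Real.rpow_natCast ((2:ℝ) ^ (-α)) k,
        ← Real.rpow_mul (by norm_num : (0:ℝ) ≤ 2),
        ← Real.rpow_mul (by norm_num : (0:ℝ) ≤ 2)]
      congr 1
      push_cast
      ring
    rw [h3] at h1
    calc |φ (shift2^[k] y) - φ (shift2^[k] x)| ≤ C * (((2:ℝ) ^ (-α)) ^ k * d ^ α) := h1
    _ = C * d ^ α * ((2:ℝ) ^ (-α)) ^ k := by ring
  have hsumg : Summable (fun k : ℕ => C * d ^ α * ((2:ℝ) ^ (-α)) ^ k) :=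
    (summable_geometric_of_lt_one hq0.le hq1).mul_left _
  have hsum : Summable (fun k : ℕ => |φ (shift2^[k] y) - φ (shift2^[k] x)|) :=
    Summable.of_nonneg_of_le (fun k => abs_nonneg _) key hsumg
  refine ⟨hsum, ?_⟩
  calc ∑' k : ℕ, |φ (shift2^[k] y) - φ (shift2^[k] x)|
      ≤ ∑' k : ℕ, C * d ^ α * ((2:ℝ) ^ (-α)) ^ k := Summable.tsum_le_tsum key hsum hsumg
    _ = C * d ^ α * (1 - (2:ℝ) ^ (-α))⁻¹ := by
        rw [tsum_mul_left, tsum_geometric_of_lt_one hq0.le hq1]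
    _ = C * d ^ α / (1 - (2:ℝ) ^ (-α)) := by rw [div_eq_mul_inv]
end

section
/- Let φ : Σ_A → ℝ be Hölder. Fix two admissible pasts a, b : {i : ℤ // i < 0} → Fin r (meaning A (a i) (a (i+1)) holds for all i < −1, and likewise for b). For a one-sided admissible sequence c with A (a (−1)) (c 0) and A (b (−1)) (c 0), let a·c and b·c denote the points of Σ_A equal to a on negative indices and to c on nonnegative indices, and set F(c) = Σ_{k=0}^∞ (φ(σ^k (b·c)) − φ(σ^k (a·c))) (this series converges absolutely). Then F is Hölder on its domain: there exist C' > 0 and α' ∈ (0,1] such that |F(c) − F(c')| ≤ C' · d⁺(c,c')^{α'} for all one-sided admissible sequences c, c' in the domain of F. -/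
open Real

variable {r : ℕ}

/-- The one-sided metric `d⁺(c,c') = ∑_{i ∈ ℕ, c i ≠ c' i} 2^{-i}` on
one-sided sequences. -/
noncomputable def distPlus (c c' : ℕ → Fin r) : ℝ :=
  ∑' i : ℕ, if c i ≠ c' i then ((2 : ℝ)⁻¹) ^ i else 0

/-- `ψ` is Hölder with respect to the distance function `d`. -/
def IsHolderWrt {X : Type*} (d : X → X → ℝ) (ψ : X → ℝ) : Prop :=
  ∃ C > 0, ∃ α ∈ Set.Ioc (0 : ℝ) 1, ∀ x y, |ψ x - ψ y| ≤ C * d x y ^ α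

/-- The point `a·c` of `Σ_A` equal to the past `a` on negative indices and to
the one-sided admissible sequence `c` on nonnegative indices.  Admissibility
requires: `a` admissible on negative indices, `c` admissible, and
`A (a (−1)) (c 0)`. -/
def pastePt (A : Fin r → Fin r → Prop) (a : ℤ → Fin r) (c : ℕ → Fin r)
    (ha : ∀ i : ℤ, i < -1 → A (a i) (a (i + 1)))
    (hc : ∀ i : ℕ, A (c i) (c (i + 1)))
    (hac : A (a (-1)) (c 0)) : TwoSided A :=
  ⟨fun i => if h : i < 0 then a i else c i.toNat, by
    intro i
    rcases lt_trichotomy i (-1) with h | h | h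
    · have h1 : i < 0 := by omega
      have h2 : i + 1 < 0 := by omega
      simp only [dif_pos h1, dif_pos h2]
      exact ha i h
    · subst h
      have h1 : (-1 : ℤ) < 0 := by norm_num
      have h2 : ¬ ((-1 : ℤ) + 1 < 0) := by norm_num
      simp only [dif_pos h1, dif_neg h2]
      have h3 : ((-1 : ℤ) + 1).toNat = 0 := by norm_num
      rw [h3]
      exact hac
    · have h1 : ¬ i < 0 := by omega
      have h2 : ¬ i + 1 < 0 := by omega
      simp only [dif_neg h1, dif_neg h2]
      have h3 : (i + 1).toNat = i.toNat + 1 := by omega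
      rw [h3]
      exact hc i.toNat⟩

/-!
Let `N` be the first index where `c` and `c'` differ, so that `2⁻¹ ^ N ≤ d⁺(c, c')`. The `k`-th
term of `F(c) - F(c')` is `(φ(σᵏ(b·c)) - φ(σᵏ(a·c))) - (φ(σᵏ(b·c')) - φ(σᵏ(a·c')))`. Grouped this
way, each bracket compares points that agree on `(-k, ∞)`, hence is `O(2^{-αk})`; grouped as
`(φ(σᵏ(b·c)) - φ(σᵏ(b·c'))) - (φ(σᵏ(a·c)) - φ(σᵏ(a·c')))`, each bracket compares points that
agree on `(-∞, N - k)`, hence is `O(2^{-α(N-k)})`. Since `max k (N - k) ≥ N / 4 + k / 2`, the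
`k`-th term is `O(2^{-αN/4} 2^{-αk/2})`, and summing the geometric series gives
`|F(c) - F(c')| = O(d⁺(c, c')^{α/4})`.
-/

theorem hasSum_inv_two_pow_natAbs_ge (m : ℕ) :
    HasSum (fun i : ℤ => if m ≤ i.natAbs then (2 : ℝ)⁻¹ ^ i.natAbs else 0)
      (4 * 2⁻¹ ^ m - if m ≤ 0 then 1 else 0) := by
  have hnat : HasSum (fun n : ℕ => if m ≤ n then (2 : ℝ)⁻¹ ^ n else 0) (2 * 2⁻¹ ^ m) := by
    rw [← tsum_geometric_inv_two_ge]
    refine Summable.hasSum (summable_geometric_two.indicator {n | m ≤ n} |>.congr fun n => ?_)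
    simp [Set.indicator_apply]
  have hint := HasSum.of_nat_of_neg
    (f := fun i : ℤ => if m ≤ i.natAbs then (2 : ℝ)⁻¹ ^ i.natAbs else 0)
    (by simpa using hnat) (by simpa using hnat)
  rwa [Int.natAbs_zero, pow_zero, ← two_mul, ← mul_assoc, ← inv_pow,
    show (2 : ℝ) * 2 = 4 by norm_num] at hint

section TwoSided

variable {A : Fin r → Fin r → Prop}

theorem dist2_le_of_eq_of_natAbs_lt {x y : TwoSided A} {m : ℕ}
    (h : ∀ i : ℤ, i.natAbs < m → x.1 i = y.1 i) : dist2 x y ≤ 4 * 2⁻¹ ^ m := by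
  set g := fun i : ℤ => if m ≤ i.natAbs then (2 : ℝ)⁻¹ ^ i.natAbs else 0
  have hterm : ∀ i : ℤ, (if x.1 i ≠ y.1 i then (2 : ℝ) ^ (-|i|) else 0) ≤ g i := by
    intro i
    by_cases hi : x.1 i = y.1 i
    · simp only [hi, ne_eq, not_true_eq_false, if_false, g]
      split <;> positivity
    · have hm : m ≤ i.natAbs := not_lt.mp fun hlt => hi (h i hlt)
      rw [if_pos hi, zpow_neg, Int.abs_eq_natAbs, zpow_natCast, ← inv_pow]
      exact (if_pos hm).ge
  have hg := hasSum_inv_two_pow_natAbs_ge m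
  calc dist2 x y ≤ ∑' i, g i :=
        Summable.tsum_le_tsum hterm
          (hg.summable.of_nonneg_of_le (fun i => by split <;> positivity) hterm) hg.summable
    _ ≤ 4 * 2⁻¹ ^ m := by
        rw [hg.tsum_eq]
        exact sub_le_self _ (by split <;> norm_num)

theorem abs_sub_le_of_eq_of_natAbs_lt {φ : TwoSided A → ℝ} {C α : ℝ} (hC : 0 ≤ C) (hα : 0 ≤ α)
    (hφ : ∀ x y, |φ x - φ y| ≤ C * dist2 x y ^ α) {x y : TwoSided A} {m : ℕ}
    (h : ∀ i : ℤ, i.natAbs < m → x.1 i = y.1 i) :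
    |φ x - φ y| ≤ C * 4 ^ α * ((2⁻¹ : ℝ) ^ (α / 4)) ^ (4 * m) := by
  have hdist_nonneg : 0 ≤ dist2 x y := tsum_nonneg fun i => by split <;> positivity
  have hpow : ((2⁻¹ : ℝ) ^ m) ^ α = ((2⁻¹ : ℝ) ^ (α / 4)) ^ (4 * m) := by
    rw [← Real.rpow_natCast_mul (by norm_num), ← Real.rpow_mul_natCast (by norm_num)]
    push_cast
    ring_nf
  calc |φ x - φ y| ≤ C * dist2 x y ^ α := hφ x y
    _ ≤ C * (4 * 2⁻¹ ^ m) ^ α := by gcongr; exact dist2_le_of_eq_of_natAbs_lt h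
    _ = C * 4 ^ α * ((2⁻¹ : ℝ) ^ (α / 4)) ^ (4 * m) := by
        rw [Real.mul_rpow (by norm_num) (by positivity), hpow, mul_assoc]

theorem shift2_iter_apply (k : ℕ) (x : TwoSided A) (i : ℤ) :
    (shift2^[k] x).1 i = x.1 (i + k) := by
  induction k generalizing x with
  | zero => simp
  | succ n ih =>
    rw [Function.iterate_succ_apply, ih]
    simp only [shift2, Nat.cast_succ]
    ring_nf

theorem pastePt_apply (a : ℤ → Fin r) (c : ℕ → Fin r) (ha : ∀ i : ℤ, i < -1 → A (a i) (a (i + 1)))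
    (hc : ∀ i : ℕ, A (c i) (c (i + 1))) (hac : A (a (-1)) (c 0)) (i : ℤ) :
    (pastePt A a c ha hc hac).1 i = if i < 0 then a i else c i.toNat :=
  rfl

variable {a b : ℤ → Fin r} {ha : ∀ i : ℤ, i < -1 → A (a i) (a (i + 1))}
  {hb : ∀ i : ℤ, i < -1 → A (b i) (b (i + 1))}

theorem shift2_iter_pastePt_apply_eq_of_natAbs_lt {c : ℕ → Fin r}
    {hc : ∀ i : ℕ, A (c i) (c (i + 1))} {hac : A (a (-1)) (c 0)} {hbc : A (b (-1)) (c 0)}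
    {k : ℕ} {i : ℤ} (hi : i.natAbs < k) :
    (shift2^[k] (pastePt A b c hb hc hbc)).1 i = (shift2^[k] (pastePt A a c ha hc hac)).1 i := by
  rw [shift2_iter_apply, shift2_iter_apply, pastePt_apply, pastePt_apply, if_neg (by omega),
    if_neg (by omega)]

theorem shift2_iter_pastePt_apply_eq_of_eqOn_lt {c c' : ℕ → Fin r}
    {hc : ∀ i : ℕ, A (c i) (c (i + 1))} {hc' : ∀ i : ℕ, A (c' i) (c' (i + 1))}
    {hac : A (a (-1)) (c 0)} {hac' : A (a (-1)) (c' 0)} {N : ℕ} (hcc' : ∀ j < N, c j = c' j)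
    {k : ℕ} {i : ℤ} (hi : i.natAbs < N - k) :
    (shift2^[k] (pastePt A a c ha hc hac)).1 i = (shift2^[k] (pastePt A a c' ha hc' hac')).1 i := by
  rw [shift2_iter_apply, shift2_iter_apply, pastePt_apply, pastePt_apply]
  split_ifs
  · rfl
  · exact hcc' _ (by omega)

end TwoSided

theorem exists_eqOn_lt_and_inv_two_pow_le_distPlus {c c' : ℕ → Fin r} (hne : c ≠ c') :
    ∃ N, (∀ j < N, c j = c' j) ∧ (2⁻¹ : ℝ) ^ N ≤ distPlus c c' := by
  classical
  have hex : ∃ n, c n ≠ c' n := Function.ne_iff.mp hne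
  refine ⟨Nat.find hex, fun j hj => not_not.mp (Nat.find_min hex hj), ?_⟩
  have hsum : Summable fun i => if c i ≠ c' i then (2⁻¹ : ℝ) ^ i else 0 :=
    summable_geometric_two.of_nonneg_of_le (fun i => by split <;> positivity)
      fun i => by split <;> simp
  have hle := hsum.le_tsum (Nat.find hex) fun j _ => by split <;> positivity
  rwa [if_pos (Nat.find_spec hex)] at hle

theorem abs_tsum_sub_sub_tsum_sub_le {P Q P' Q' : ℕ → ℝ} {B η : ℝ} (N : ℕ) (hη0 : 0 ≤ η)
    (hη1 : η < 1) (hPQ : ∀ k, |P k - Q k| ≤ B * η ^ (4 * k))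
    (hPQ' : ∀ k, |P' k - Q' k| ≤ B * η ^ (4 * k))
    (hPP' : ∀ k, |P k - P' k| ≤ B * η ^ (4 * (N - k)))
    (hQQ' : ∀ k, |Q k - Q' k| ≤ B * η ^ (4 * (N - k))) :
    |∑' k, (P k - Q k) - ∑' k, (P' k - Q' k)| ≤ 2 * B * (1 - η ^ 2)⁻¹ * η ^ N := by
  have hB : 0 ≤ B := by simpa using (abs_nonneg _).trans (hPQ 0)
  have hgeom : ∀ k, B * η ^ (4 * k) = B * (η ^ 4) ^ k := fun k => by rw [pow_mul]
  have hsummable : ∀ {f g : ℕ → ℝ}, (∀ k, |f k - g k| ≤ B * η ^ (4 * k)) →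
      Summable fun k => f k - g k := fun h =>
    ((summable_geometric_of_lt_one (by positivity) (pow_lt_one₀ hη0 hη1 (by norm_num))).mul_left
      B).of_norm_bounded fun k => (h k).trans_eq (hgeom k)
  have hterm : ∀ k, ‖(P k - Q k) - (P' k - Q' k)‖ ≤ 2 * B * η ^ N * (η ^ 2) ^ k := by
    intro k
    have hmono : ∀ n, N + 2 * k ≤ n → B * η ^ n ≤ B * η ^ N * (η ^ 2) ^ k := fun n hn => by
      rw [mul_assoc, ← pow_mul, ← pow_add]
      exact mul_le_mul_of_nonneg_left (pow_le_pow_of_le_one hη0 hη1.le hn) hB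
    rw [Real.norm_eq_abs]
    rcases le_or_gt (2 * k) N with hk | hk
    · calc |(P k - Q k) - (P' k - Q' k)| = |(P k - P' k) - (Q k - Q' k)| := by ring_nf
        _ ≤ |P k - P' k| + |Q k - Q' k| := abs_sub _ _
        _ ≤ 2 * B * η ^ N * (η ^ 2) ^ k := by
            linarith [hPP' k, hQQ' k, hmono (4 * (N - k)) (by omega)]
    · calc |(P k - Q k) - (P' k - Q' k)| ≤ |P k - Q k| + |P' k - Q' k| := abs_sub _ _
        _ ≤ 2 * B * η ^ N * (η ^ 2) ^ k := by
            linarith [hPQ k, hPQ' k, hmono (4 * k) (by omega)]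
  rw [← (hsummable hPQ).tsum_sub (hsummable hPQ'), ← Real.norm_eq_abs]
  calc ‖∑' k, ((P k - Q k) - (P' k - Q' k))‖ ≤ 2 * B * η ^ N * (1 - η ^ 2)⁻¹ :=
        tsum_of_norm_bounded ((hasSum_geometric_of_lt_one (by positivity)
          (pow_lt_one₀ hη0 hη1 (by norm_num))).mul_left _) hterm
    _ = 2 * B * (1 - η ^ 2)⁻¹ * η ^ N := by ring

/-- Let `φ : Σ_A → ℝ` be Hölder, and fix two admissible pasts `a`, `b`.
For a one-sided admissible sequence `c` compatible with both pasts, set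
`F(c) = ∑_{k=0}^∞ (φ(σ^k (b·c)) − φ(σ^k (a·c)))`.  Then `F` is Hölder on its
domain with respect to the one-sided metric `d⁺`. -/
theorem transfer_series_holder
    {A : Fin r → Fin r → Prop} (φ : TwoSided A → ℝ)
    (hφ : IsHolderWrt dist2 φ)
    (a b : ℤ → Fin r)
    (ha : ∀ i : ℤ, i < -1 → A (a i) (a (i + 1)))
    (hb : ∀ i : ℤ, i < -1 → A (b i) (b (i + 1))) :
    ∃ C' > 0, ∃ α' ∈ Set.Ioc (0 : ℝ) 1,
      ∀ (c c' : ℕ → Fin r)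
        (hc : ∀ i : ℕ, A (c i) (c (i + 1))) (hc' : ∀ i : ℕ, A (c' i) (c' (i + 1)))
        (hac : A (a (-1)) (c 0)) (hbc : A (b (-1)) (c 0))
        (hac' : A (a (-1)) (c' 0)) (hbc' : A (b (-1)) (c' 0)),
        |(∑' k : ℕ, (φ (shift2^[k] (pastePt A b c hb hc hbc)) -
              φ (shift2^[k] (pastePt A a c ha hc hac)))) -
          (∑' k : ℕ, (φ (shift2^[k] (pastePt A b c' hb hc' hbc')) -
              φ (shift2^[k] (pastePt A a c' ha hc' hac'))))| ≤
          C' * distPlus c c' ^ α' := by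
  obtain ⟨C, hC, α, ⟨hα0, hα1⟩, hφ⟩ := hφ
  set η : ℝ := (2⁻¹ : ℝ) ^ (α / 4) with hη
  have hη0 : 0 ≤ η := by positivity
  have hη1 : η < 1 := Real.rpow_lt_one (by norm_num) (by norm_num) (by positivity)
  have hη2 : 0 < 1 - η ^ 2 := sub_pos.mpr (pow_lt_one₀ hη0 hη1 (by norm_num))
  refine ⟨2 * (C * 4 ^ α) * (1 - η ^ 2)⁻¹, by positivity, α / 4, ⟨by positivity, by linarith⟩, ?_⟩
  intro c c' hc hc' hac hbc hac' hbc'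
  obtain rfl | hne := eq_or_ne c c'
  · simp [distPlus, Real.zero_rpow, hα0.ne']
  obtain ⟨N, hcc', hN⟩ := exists_eqOn_lt_and_inv_two_pow_le_distPlus hne
  have hηN : η ^ N ≤ distPlus c c' ^ (α / 4) := by
    rw [hη, ← Real.rpow_mul_natCast (by norm_num), mul_comm, Real.rpow_natCast_mul (by norm_num)]
    gcongr
  calc _ ≤ 2 * (C * 4 ^ α) * (1 - η ^ 2)⁻¹ * η ^ N :=
        abs_tsum_sub_sub_tsum_sub_le N hη0 hη1
          (fun _ => abs_sub_le_of_eq_of_natAbs_lt hC.le hα0.le hφ fun _ =>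
            shift2_iter_pastePt_apply_eq_of_natAbs_lt)
          (fun _ => abs_sub_le_of_eq_of_natAbs_lt hC.le hα0.le hφ fun _ =>
            shift2_iter_pastePt_apply_eq_of_natAbs_lt)
          (fun _ => abs_sub_le_of_eq_of_natAbs_lt hC.le hα0.le hφ fun _ =>
            shift2_iter_pastePt_apply_eq_of_eqOn_lt hcc')
          (fun _ => abs_sub_le_of_eq_of_natAbs_lt hC.le hα0.le hφ fun _ =>
            shift2_iter_pastePt_apply_eq_of_eqOn_lt hcc')
    _ ≤ 2 * (C * 4 ^ α) * (1 - η ^ 2)⁻¹ * distPlus c c' ^ (α / 4) := by gcongr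
end

section
/- For all natural numbers n and m, every n-cylinder [v] and every (n+m)-cylinder [w] with [w] ⊆ [v] satisfy μ₀([w]) ≤ λ^{M−m} · μ₀([v]) (exponentially decreasing geometry of the cylinder partitions). -/
open MeasureTheory Real
open scoped ENNReal

variable {r : ℕ}

/-- The one-sided subshift of finite type determined by the transition
matrix `A`. -/
abbrev OneSided (A : Fin r → Fin r → Prop) : Type :=
  {x : ℕ → Fin r // ∀ i, A (x i) (x (i + 1))}

/-- The shift map `σ` on the one-sided subshift. -/
def shift1 {A : Fin r → Fin r → Prop} (x : OneSided A) : OneSided A :=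
  ⟨fun i => x.1 (i + 1), fun i => x.2 (i + 1)⟩

/-- The metric `d(x,y) = ∑_{i ∈ ℕ, x i ≠ y i} 2^{-i}` on the one-sided
subshift. -/
noncomputable def dist1 {A : Fin r → Fin r → Prop} (x y : OneSided A) : ℝ :=
  ∑' i : ℕ, if x.1 i ≠ y.1 i then ((2 : ℝ)⁻¹) ^ i else 0

/-- A word `w : Fin n → Fin r` is admissible if `A (w i) (w (i+1))` for all
`i < n − 1`. -/
def AdmissibleWord {n : ℕ} (A : Fin r → Fin r → Prop) (w : Fin n → Fin r) : Prop :=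
  ∀ i : ℕ, ∀ h : i + 1 < n, A (w ⟨i, Nat.lt_of_succ_lt h⟩) (w ⟨i + 1, h⟩)

/-- The `n`-cylinder `[w]` of a word `w : Fin n → Fin r`. -/
def Cyl (A : Fin r → Fin r → Prop) {n : ℕ} (w : Fin n → Fin r) : Set (OneSided A) :=
  {x | ∀ i : Fin n, x.1 i = w i}

/-- `(P, μ)` is a conformal pair for `φ`: `μ` is a Borel probability measure
with `μ(σ '' E) = ∫_E exp(P − φ) dμ` for every Borel `E` contained in a
1-cylinder.  This encodes `log(dμ(σx)/dμ(x)) = −φ(x) + P`. -/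
def ConformalPair (A : Fin r → Fin r → Prop) (φ : OneSided A → ℝ) (P : ℝ)
    (μ : Measure (OneSided A)) : Prop :=
  IsProbabilityMeasure μ ∧
    ∀ (j : Fin r) (E : Set (OneSided A)), MeasurableSet E → (∀ x ∈ E, x.1 0 = j) →
      μ (shift1 '' E) = ∫⁻ x in E, ENNReal.ofReal (Real.exp (P - φ x)) ∂μ

/-- `Σ_A⁺` is transitive: some point has dense forward orbit under `σ`. -/
def Transitive1 (A : Fin r → Fin r → Prop) : Prop :=
  ∃ x : OneSided A, Dense (Set.range fun n : ℕ => shift1^[n] x)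

/-- `Σ_A⁺` is mixing with constant `M`: for all symbols `i`, `j` there is an
admissible word of length `M+1` beginning with `i` and ending with `j`. -/
def MixingWith (A : Fin r → Fin r → Prop) (M : ℕ) : Prop :=
  1 ≤ M ∧ ∀ i j : Fin r, ∃ w : Fin (M + 1) → Fin r,
    AdmissibleWord A w ∧ w 0 = i ∧ w (Fin.last M) = j


section Aux

variable {A : Fin r → Fin r → Prop}

lemma cyl_measurableSet {n : ℕ} (w : Fin n → Fin r) : MeasurableSet (Cyl A w) := by
  have h : Cyl A w = ⋂ i : Fin n, (fun x : OneSided A => x.1 i) ⁻¹' {w i} := by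
    ext x; simp [Cyl]
  rw [h]
  exact MeasurableSet.iInter fun i =>
    ((measurable_pi_apply ((i : ℕ))).comp measurable_subtype_coe) (measurableSet_singleton _)

/-- The tail of a word. -/
def tl {k : ℕ} (w : Fin (k + 1) → Fin r) : Fin k → Fin r := fun i => w i.succ

lemma tl_admissible {k : ℕ} {w : Fin (k + 2) → Fin r} (hw : AdmissibleWord A w) :
    AdmissibleWord A (tl w) := by
  intro i h
  exact hw (i + 1) (by omega)

lemma shift_image_cyl {k : ℕ} {w : Fin (k + 2) → Fin r} (hw : AdmissibleWord A w) :
    shift1 '' Cyl A w = Cyl A (tl w) := by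
  ext y
  constructor
  · rintro ⟨x, hx, rfl⟩ i
    exact hx i.succ
  · intro hy
    refine ⟨⟨fun i => Nat.rec (w ⟨0, by omega⟩) (fun j _ => y.1 j) i, ?_⟩, ?_, ?_⟩
    · intro i
      cases i with
      | zero =>
        show A (w ⟨0, by omega⟩) (y.1 0)
        rw [show y.1 0 = w ⟨1, by omega⟩ from hy ⟨0, by omega⟩]
        exact hw 0 (by omega)
      | succ j => exact y.2 j
    · rintro ⟨i, hi⟩
      cases i with
      | zero => rfl
      | succ j => exact hy ⟨j, by omega⟩
    · exact Subtype.ext (funext fun i => rfl)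

lemma one_step (P₀ : ℝ) (μ₀ : MeasureTheory.Measure (OneSided A))
    (hpair₀ : ConformalPair A (fun _ => 0) P₀ μ₀)
    {k : ℕ} {w : Fin (k + 2) → Fin r} (hw : AdmissibleWord A w) :
    μ₀ (Cyl A (tl w)) = ENNReal.ofReal (Real.exp P₀) * μ₀ (Cyl A w) := by
  have h := hpair₀.2 (w ⟨0, by omega⟩) (Cyl A w) (cyl_measurableSet w)
    (fun x hx => hx ⟨0, by omega⟩)
  rw [shift_image_cyl hw] at h
  rw [h]
  simp [MeasureTheory.setLIntegral_const]

lemma push (P₀ : ℝ) (μ₀ : MeasureTheory.Measure (OneSided A))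
    (hpair₀ : ConformalPair A (fun _ => 0) P₀ μ₀) :
    ∀ (k : ℕ) (w : Fin (k + 1) → Fin r), AdmissibleWord A w →
      μ₀ (Cyl A (fun _ : Fin 1 => w (Fin.last k))) =
        (ENNReal.ofReal (Real.exp P₀)) ^ k * μ₀ (Cyl A w) := by
  intro k
  induction k with
  | zero =>
    intro w hw
    have h : (fun _ : Fin 1 => w (Fin.last 0)) = w := by
      funext i; congr 1; exact Fin.ext (by have := i.isLt; simp [Fin.last])
    rw [h, pow_zero, one_mul]
  | succ k ih =>
    intro w hw
    have h1 := ih (tl w) (tl_admissible hw)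
    have h2 : tl w (Fin.last k) = w (Fin.last (k + 1)) := rfl
    rw [h2] at h1
    rw [h1, one_step P₀ μ₀ hpair₀ hw, pow_succ]
    ring

lemma push' (P₀ : ℝ) (μ₀ : MeasureTheory.Measure (OneSided A))
    (hpair₀ : ConformalPair A (fun _ => 0) P₀ μ₀)
    (k : ℕ) (hk : 0 < k) (w : Fin k → Fin r) (hw : AdmissibleWord A w) :
    μ₀ (Cyl A (fun _ : Fin 1 => w ⟨k - 1, by omega⟩)) =
      (ENNReal.ofReal (Real.exp P₀)) ^ (k - 1) * μ₀ (Cyl A w) := by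
  cases k with
  | zero => omega
  | succ k' => exact push P₀ μ₀ hpair₀ k' w hw

lemma symbol_le {M : ℕ} (hmix : MixingWith A M)
    (P₀ : ℝ) (μ₀ : MeasureTheory.Measure (OneSided A))
    (hpair₀ : ConformalPair A (fun _ => 0) P₀ μ₀) (a b : Fin r) :
    μ₀ (Cyl A (fun _ : Fin 1 => a)) ≤
      (ENNReal.ofReal (Real.exp P₀)) ^ M * μ₀ (Cyl A (fun _ : Fin 1 => b)) := by
  obtain ⟨u, hu, hu0, hul⟩ := hmix.2 b a
  have h := push P₀ μ₀ hpair₀ M u hu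
  rw [hul] at h
  rw [h]
  refine mul_le_mul_right (MeasureTheory.measure_mono ?_) _
  intro x hx i
  have h0 : x.1 0 = b := by
    have := hx ⟨0, Nat.succ_pos M⟩
    simpa [hu0] using this
  have hval : (i : ℕ) = 0 := by have := i.isLt; omega
  show x.1 (i : ℕ) = b
  rw [hval]; exact h0

end Aux


/-- (Exponentially decreasing geometry) For the conformal measure `μ₀` of the
constant function `0` with `λ = exp P₀ > 1` on a subshift mixing with
constant `M`: any `(n+m)`-cylinder `[w]` contained in an `n`-cylinder `[v]`
satisfies `μ₀([w]) ≤ λ^{M−m} · μ₀([v])`. -/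
theorem cylinder_measure_exponentially_decreasing
    {A : Fin r → Fin r → Prop} (M : ℕ) (hmix : MixingWith A M)
    (hcylne : ∀ (n : ℕ) (w : Fin n → Fin r), AdmissibleWord A w → (Cyl A w).Nonempty)
    (P₀ : ℝ) (μ₀ : Measure (OneSided A))
    (hpair₀ : ConformalPair A (fun _ => 0) P₀ μ₀)
    (hlam : 1 < Real.exp P₀)
    (n m : ℕ) (v : Fin n → Fin r) (w : Fin (n + m) → Fin r)
    (hv : AdmissibleWord A v) (hw : AdmissibleWord A w)
    (hsub : Cyl A w ⊆ Cyl A v) :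
    μ₀ (Cyl A w) ≤ ENNReal.ofReal (Real.exp P₀ ^ ((M : ℤ) - (m : ℤ))) * μ₀ (Cyl A v) := by
  have hprob : IsProbabilityMeasure μ₀ := hpair₀.1
  set lE := ENNReal.ofReal (Real.exp P₀) with hlE
  have hE0 : lE ≠ 0 := by
    simpa [hlE] using Real.exp_pos P₀
  have hEt : lE ≠ ⊤ := ENNReal.ofReal_ne_top
  have hE1 : (1 : ℝ≥0∞) ≤ lE := by
    rw [hlE, ← ENNReal.ofReal_one]
    exact ENNReal.ofReal_le_ofReal hlam.le
  have hEM : (1 : ℝ≥0∞) ≤ lE ^ M := one_le_pow_of_one_le' hE1 M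
  -- master inequality
  have master : lE ^ m * μ₀ (Cyl A w) ≤ lE ^ M * μ₀ (Cyl A v) := by
    cases n with
    | zero =>
      have hvuniv : Cyl A v = Set.univ := by
        ext x; simp [Cyl]
      have hbound : lE ^ (0 + m) * μ₀ (Cyl A w) ≤ lE ^ M := by
        cases m with
        | zero =>
          have hwuniv : Cyl A w = Set.univ := by ext x; simp [Cyl]
          simp [hwuniv, hEM]
        | succ m' =>
          haveI := hprob
          have hM1 := hmix.1
          have hp := push' P₀ μ₀ hpair₀ (0 + (m' + 1)) (by omega) w hw
          simp only [show 0 + (m' + 1) - 1 = m' from by omega] at hp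
          simp only [Nat.zero_add]
          rw [pow_succ, mul_comm (lE ^ m') lE, mul_assoc, ← hp]
          refine le_trans (mul_le_mul_right MeasureTheory.prob_le_one lE) ?_
          rw [mul_one]
          exact le_self_pow₀ hE1 (by omega)
      rw [hvuniv]
      simp only [measure_univ, mul_one]
      simpa using hbound
    | succ n' =>
      have hpv := push P₀ μ₀ hpair₀ n' v hv
      have hpw := push' P₀ μ₀ hpair₀ (n' + 1 + m) (by omega) w hw
      simp only [show n' + 1 + m - 1 = n' + m from by omega] at hpw
      have hsym := symbol_le hmix P₀ μ₀ hpair₀ (w ⟨n' + m, by omega⟩) (v (Fin.last n'))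
      rw [← ENNReal.mul_le_mul_iff_right (pow_ne_zero n' hE0) (ENNReal.pow_ne_top hEt)]
      calc lE ^ n' * (lE ^ m * μ₀ (Cyl A w)) = lE ^ (n' + m) * μ₀ (Cyl A w) := by
            rw [← mul_assoc, ← pow_add]
        _ = μ₀ (Cyl A (fun _ : Fin 1 => w ⟨n' + m, by omega⟩)) := hpw.symm
        _ ≤ lE ^ M * μ₀ (Cyl A (fun _ : Fin 1 => v (Fin.last n'))) := hsym
        _ = lE ^ M * (lE ^ n' * μ₀ (Cyl A v)) := by rw [hpv]
        _ = lE ^ n' * (lE ^ M * μ₀ (Cyl A v)) := by ring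
  -- conversion from the master inequality
  have key : ENNReal.ofReal (Real.exp P₀ ^ ((M : ℤ) - (m : ℤ))) * lE ^ m = lE ^ M := by
    rw [hlE, ← ENNReal.ofReal_pow (Real.exp_pos _).le,
      ← ENNReal.ofReal_mul (by positivity), ← ENNReal.ofReal_pow (Real.exp_pos _).le]
    congr 1
    rw [← zpow_natCast (Real.exp P₀) m, ← zpow_add₀ (Real.exp_ne_zero P₀),
      ← zpow_natCast (Real.exp P₀) M]
    congr 1
    omega
  rw [← ENNReal.mul_le_mul_iff_left (pow_ne_zero m hE0) (ENNReal.pow_ne_top hEt)]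
  calc μ₀ (Cyl A w) * lE ^ m = lE ^ m * μ₀ (Cyl A w) := mul_comm _ _
    _ ≤ lE ^ M * μ₀ (Cyl A v) := master
    _ = ENNReal.ofReal (Real.exp P₀ ^ ((M : ℤ) - (m : ℤ))) * μ₀ (Cyl A v) * lE ^ m := by
        rw [mul_right_comm, key]
end
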